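/- Let L ⊆ L' be a finite extension of fields of characteristic p, and suppose the degree [L : L^p] is finite. Then [L' : L'^p] = [L : L^p]. -/

import Mathlib

/-!
The Frobenius `x ↦ x ^ p` identifies the extension `L'/L` with `L'^p/L^p`, so
`[L'^p : L^p] = [L' : L]`. Computing `[L' : L^p]` along the towers `L^p ⊆ L ⊆ L'` and
`L^p ⊆ L'^p ⊆ L'` gives `[L : L^p] [L' : L] = [L' : L'^p] [L' : L]`, and `[L' : L] ≠ 0`
cancels.
-/

open Module

theorem finrank_eq_of_finrank_eq_of_isScalarTower {F E E' K : Type*}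
    [Field F] [Field E] [Field E'] [Field K]
    [Algebra F E] [Algebra E K] [Algebra F K] [IsScalarTower F E K]
    [Algebra F E'] [Algebra E' K] [IsScalarTower F E' K] [FiniteDimensional E K]
    (h : finrank F E' = finrank E K) :
    finrank E' K = finrank F E := by
  refine Nat.eq_of_mul_eq_mul_left (finrank_pos (R := E) (M := K)) ?_
  calc finrank E K * finrank E' K = finrank F E' * finrank E' K := by rw [h]
    _ = finrank F K := finrank_mul_finrank F E' K
    _ = finrank F E * finrank E K := (finrank_mul_finrank F E K).symm
    _ = finrank E K * finrank F E := mul_comm _ _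

section FrobeniusFieldRange

variable (p : ℕ) (K L : Type*) [Field K] [Field L] [Algebra K L] [ExpChar K p] [ExpChar L p]

def frobeniusFieldRangeHom : (frobenius K p).fieldRange →+* (frobenius L p).fieldRange :=
  (algebraMap K L).restrict _ _ <| by
    rintro _ ⟨x, rfl⟩
    exact ⟨algebraMap K L x, ((algebraMap K L).map_frobenius p x).symm⟩

instance : Algebra (frobenius K p).fieldRange (frobenius L p).fieldRange :=
  (frobeniusFieldRangeHom p K L).toAlgebra

instance : IsScalarTower (frobenius K p).fieldRange (frobenius L p).fieldRange L :=
  IsScalarTower.of_algebraMap_eq fun _ => rfl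

theorem finrank_frobenius_fieldRange :
    finrank (frobenius K p).fieldRange (frobenius L p).fieldRange = finrank K L :=
  (Algebra.finrank_eq_of_equiv_equiv (frobenius K p).rangeRestrictFieldEquiv
    (frobenius L p).rangeRestrictFieldEquiv
    (RingHom.ext fun x => Subtype.ext ((algebraMap K L).map_frobenius p x))).symm

end FrobeniusFieldRange

theorem finrank_over_frobenius_range_invariant_general
    (p : ℕ) [Fact p.Prime] (L L' : Type*) [Field L] [Field L'] [Algebra L L']
    [FiniteDimensional L L'] [CharP L p] [CharP L' p]
    (Lp : Subfield L) (L'p : Subfield L')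
    (hLp : Lp = (frobenius L p).fieldRange)
    (hL'p : L'p = (frobenius L' p).fieldRange) :
    Module.finrank L'p L' = Module.finrank Lp L := by
  subst hLp hL'p
  exact finrank_eq_of_finrank_eq_of_isScalarTower (finrank_frobenius_fieldRange p L L')

/-- Let `L ⊆ L'` be a finite extension of fields of characteristic `p`, and suppose the degree
`[L : L^p]` is finite.  Then `[L' : L'^p] = [L : L^p]`, where `K^p` denotes the subfield of `p`-th
powers of a field `K` of characteristic `p`. -/
theorem finrank_over_frobenius_range_invariant
    (p : ℕ) [Fact p.Prime] (L L' : Type*) [Field L] [Field L'] [Algebra L L']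
    [FiniteDimensional L L'] [CharP L p] [CharP L' p]
    (Lp : Subfield L) (L'p : Subfield L')
    (hLp : Lp = (frobenius L p).fieldRange)
    (hL'p : L'p = (frobenius L' p).fieldRange)
    (hfin : FiniteDimensional Lp L) :
    Module.finrank L'p L' = Module.finrank Lp L :=
  finrank_over_frobenius_range_invariant_general p L L' Lp L'p hLp hL'p
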